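/- arXiv:1806.10271 — 3 statements merged into one kernel-verified Lean document; each statement's English description precedes it below -/
import Mathlib

section
/- If m ≥ κ(n+1) + 1, then the set R = ⋂_j conv(x_{A_j}), where the A_j range over all subsets of {1,...,m} of cardinality m − κ, is nonempty. -/
/-- if m ≥ κ(n+1)+1, then the intersection R of the convex hulls
over all (m-κ)-element subsets of {1,...,m} is nonempty. -/
theorem stmt4 {n m κ : ℕ} (x : Fin m → EuclideanSpace ℝ (Fin n))
    (h : κ * (n + 1) + 1 ≤ m) :
    (⋂ A ∈ {A : Finset (Fin m) | A.card = m - κ},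
      convexHull ℝ (x '' ↑A)).Nonempty := by
  classical
  have hm : 0 < m := by omega
  have hrank : Module.finrank ℝ (EuclideanSpace ℝ (Fin n)) = n := by
    simp [finrank_euclideanSpace]
  have hset : {A : Finset (Fin m) | A.card = m - κ} =
      ↑(Finset.univ.filter (fun A : Finset (Fin m) => A.card = m - κ)) := by
    ext A; simp
  rw [hset]
  have key := Convex.helly_theorem' (𝕜 := ℝ)
    (F := fun A : Finset (Fin m) => convexHull ℝ (x '' ↑A))
    (s := Finset.univ.filter (fun A : Finset (Fin m) => A.card = m - κ))
    (fun A _ => convex_convexHull ℝ _) ?_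
  · simpa using key
  · intro I hI hIcard
    rw [hrank] at hIcard
    -- find an index i belonging to every A ∈ I
    have hcompl : ∀ A ∈ I, (Aᶜ : Finset (Fin m)).card = κ := by
      intro A hA
      have := hI hA
      simp only [Finset.mem_filter] at this
      have hA2 : A.card = m - κ := this.2
      have hle : κ ≤ m := by nlinarith
      have : (Aᶜ : Finset (Fin m)).card = m - A.card := by
        simp [Finset.card_compl]
      omega
    have hunion : (I.biUnion fun A => Aᶜ).card < m := by
      calc (I.biUnion fun A => Aᶜ).card ≤ ∑ A ∈ I, (Aᶜ : Finset (Fin m)).card :=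
            Finset.card_biUnion_le
        _ = ∑ A ∈ I, κ := Finset.sum_congr rfl hcompl
        _ = I.card * κ := by simp [mul_comm]
        _ ≤ (n + 1) * κ := by
            exact Nat.mul_le_mul_right κ hIcard
        _ < m := by nlinarith
    obtain ⟨i, hi⟩ : ∃ i : Fin m, i ∉ I.biUnion fun A => Aᶜ := by
      by_contra hc
      push_neg at hc
      have : (I.biUnion fun A => Aᶜ) = Finset.univ := Finset.eq_univ_iff_forall.mpr hc
      rw [this] at hunion
      simp at hunion
    refine ⟨x i, ?_⟩
    simp only [Set.mem_iInter]
    intro A hA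
    have hiA : i ∈ A := by
      by_contra hiA
      exact hi (Finset.mem_biUnion.mpr ⟨A, hA, Finset.mem_compl.mpr hiA⟩)
    exact subset_convexHull ℝ _ ⟨i, hiA, rfl⟩
end

section
/- (Tverberg's theorem) Given m ≥ (κ)(n+1) + 1 points x_1,...,x_m in R^n, there exists a partition of {1,...,m} into κ+1 pairwise disjoint subsets B_1,...,B_{κ+1} such that the intersection of the convex hulls conv(x_{B_1}), ..., conv(x_{B_{κ+1}}) is nonempty. -/
/-!
Sarkaria's tensor trick reduces Tverberg's theorem to Bárány's colorful Carathéodory theorem.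
Lift each point to `u i = (1, x i)` and tensor it with each of `κ + 1` vectors `e₀, …, e_κ` of
`ℝ^κ` whose only linear relations are multiples of `∑ e_j = 0`. The color classes `{e_j ⊗ u i}_j`,
one per point and more than `κ (n + 1)` of them, all contain `0` in their hull, in a space of
dimension `κ (n + 1)`, so some colorful choice `e_{σ i} ⊗ u i` has `0` in its hull. Grouping the
convex combination by `σ` gives `∑_j e_j ⊗ v_j = 0`, hence all `v_j` are equal; their first
coordinates show that each class `σ⁻¹(j)` carries mass `1 / (κ + 1)`, and their remaining
coordinates give a common point.

Colorful Carathéodory: among colorful choices, take one whose hull is closest to `0`, with nearest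
point `q`. If `q ≠ 0`, the hyperplane `⟪q, ·⟫ = ‖q‖²` supports the hull, so `q` is a positive
combination of linearly independent vertices on it and one color `i₀` is not needed. Swapping in a
point of color `i₀` with `⟪q, s⟫ ≤ 0` brings the hull strictly closer to `0`.
-/

open Set Module
open scoped RealInnerProductSpace

lemma AffineIndependent.linearIndependent_of_apply_eq {k V ι : Type*} [Field k] [AddCommGroup V]
    [Module k V] {p : ι → V} (hp : AffineIndependent k p) (f : V →ₗ[k] k) {r : k} (hr : r ≠ 0)
    (hf : ∀ i, f (p i) = r) : LinearIndependent k p := by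
  refine linearIndependent_iff'.2 fun s w hw i hi => hp.eq_zero_of_sum_eq_zero ?_ hw i hi
  have := congrArg f hw
  simp only [map_sum, map_smul, hf, smul_eq_mul, map_zero, ← Finset.sum_mul] at this
  exact (mul_eq_zero.1 this).resolve_right hr

lemma exists_mem_apply_nonpos_of_zero_mem_convexHull {E : Type*} [AddCommGroup E] [Module ℝ E]
    {s : Set E} (h : 0 ∈ convexHull ℝ s) (f : E →ₗ[ℝ] ℝ) : ∃ x ∈ s, f x ≤ 0 := by
  by_contra! hpos
  have h0 : (0 : E) ∈ {x | 0 < f x} := convexHull_min hpos (convex_halfSpace_gt f.isLinear 0) h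
  simp at h0

lemma zero_mem_convexHull_range_of_sum_eq_zero {R E ι : Type*} [Field R] [LinearOrder R]
    [IsStrictOrderedRing R] [AddCommGroup E] [Module R E] [Fintype ι] [Nonempty ι] {f : ι → E}
    (h : ∑ i, f i = 0) : 0 ∈ convexHull R (range f) := by
  have := Finset.univ.centerMass_mem_convexHull (R := R) (w := fun _ => 1) (z := f)
    (fun _ _ => zero_le_one) (by simp [Fintype.card_pos]) (fun i _ => mem_range_self i)
  simpa [Finset.centerMass, h] using this

section Inner

variable {E : Type*} [NormedAddCommGroup E] [InnerProductSpace ℝ E]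

lemma exists_mem_segment_norm_lt {q s : E} (h : ⟪q, s - q⟫ < 0) :
    ∃ y ∈ segment ℝ q s, ‖y‖ < ‖q‖ := by
  have hsq : 0 < ‖s - q‖ ^ 2 := by
    refine pow_pos (norm_pos_iff.2 fun h0 => ?_) 2
    simp [h0] at h
  set t := min 1 (-⟪q, s - q⟫ / ‖s - q‖ ^ 2)
  have ht0 : 0 < t := lt_min one_pos (div_pos (neg_pos.2 h) hsq)
  have ht : t * ‖s - q‖ ^ 2 ≤ -⟪q, s - q⟫ := (le_div_iff₀ hsq).1 (min_le_right _ _)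
  refine ⟨q + t • (s - q), ⟨1 - t, t, by linarith [min_le_left 1 (-⟪q, s - q⟫ / ‖s - q‖ ^ 2)],
    ht0.le, by ring, by module⟩, ?_⟩
  have hexp : ‖q + t • (s - q)‖ ^ 2 = ‖q‖ ^ 2 + 2 * t * ⟪q, s - q⟫ + t * (t * ‖s - q‖ ^ 2) := by
    rw [norm_add_sq_real, real_inner_smul_right, norm_smul, mul_pow, Real.norm_eq_abs, sq_abs]
    ring
  refine lt_of_pow_lt_pow_left₀ 2 (norm_nonneg q) ?_
  nlinarith [mul_le_mul_of_nonneg_left ht ht0.le]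

lemma Convex.norm_sq_le_inner_of_forall_norm_le {K : Set E} (hK : Convex ℝ K) {q : E}
    (hq : q ∈ K) (hmin : ∀ y ∈ K, ‖q‖ ≤ ‖y‖) {y : E} (hy : y ∈ K) : ‖q‖ ^ 2 ≤ ⟪q, y⟫ := by
  by_contra! hlt
  obtain ⟨z, hz, hzq⟩ := exists_mem_segment_norm_lt (q := q) (s := y) (by
    rw [inner_sub_right, real_inner_self_eq_norm_sq]; linarith)
  exact hzq.not_ge (hmin z (hK.segment_subset hq hy hz))

variable [FiniteDimensional ℝ E] {ι : Type*} [Fintype ι]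

lemma exists_mem_convexHull_image_compl_singleton {c : ι → E} {q : E}
    (hq : q ∈ convexHull ℝ (range c)) (hq0 : q ≠ 0) (hsupp : ∀ i, ‖q‖ ^ 2 ≤ ⟪q, c i⟫)
    (hcard : finrank ℝ E < Fintype.card ι) : ∃ i₀, q ∈ convexHull ℝ (c '' {i₀}ᶜ) := by
  obtain ⟨τ, _, z, w, hzc, hz, hw0, hw1, hwz⟩ := eq_pos_convex_span_of_mem_convexHull hq
  choose g hg using fun t => hzc (mem_range_self t)
  have hz_on : ∀ t, ⟪q, z t⟫ = ‖q‖ ^ 2 := by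
    have hsum : ∑ t, w t * (⟪q, z t⟫ - ‖q‖ ^ 2) = 0 := by
      simp_rw [mul_sub, Finset.sum_sub_distrib, ← Finset.sum_mul, hw1, ← real_inner_smul_right,
        ← inner_sum, hwz, real_inner_self_eq_norm_sq, one_mul, sub_self]
    have hnonneg : ∀ t ∈ Finset.univ, 0 ≤ w t * (⟪q, z t⟫ - ‖q‖ ^ 2) := fun t _ =>
      mul_nonneg (hw0 t).le (sub_nonneg.2 (hg t ▸ hsupp (g t)))
    intro t
    have := (Finset.sum_eq_zero_iff_of_nonneg hnonneg).1 hsum t (Finset.mem_univ t)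
    linarith [(mul_eq_zero.1 this).resolve_left (hw0 t).ne']
  have hlin : LinearIndependent ℝ z := hz.linearIndependent_of_apply_eq (innerₛₗ ℝ q)
    (pow_ne_zero 2 (norm_ne_zero_iff.2 hq0)) hz_on
  obtain ⟨i₀, hi₀⟩ : ∃ i₀, i₀ ∉ range g := by
    by_contra! hsurj
    exact (Fintype.card_le_of_surjective g hsurj).not_gt
      (hlin.fintype_card_le_finrank.trans_lt hcard)
  refine ⟨i₀, hwz ▸ (convex_convexHull ℝ _).sum_mem (fun t _ => (hw0 t).le) hw1
    fun t _ => subset_convexHull ℝ _ ⟨g t, fun h => hi₀ ⟨t, h⟩, hg t⟩⟩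

theorem exists_colorful_zero_mem_convexHull_of_inner (S : ι → Set E)
    (hS_fin : ∀ i, (S i).Finite) (hS : ∀ i, (0 : E) ∈ convexHull ℝ (S i))
    (hcard : finrank ℝ E < Fintype.card ι) :
    ∃ c : ι → E, (∀ i, c i ∈ S i) ∧ (0 : E) ∈ convexHull ℝ (range c) := by
  classical
  have : ∀ i, Finite (S i) := fun i => (hS_fin i).to_subtype
  have : ∀ i, Nonempty (S i) := fun i => (convexHull_nonempty_iff.1 ⟨0, hS i⟩).to_subtype
  have : Nonempty ι := Fintype.card_pos_iff.1 (by omega)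
  let hull (c : ∀ i, S i) : Set E := convexHull ℝ (range fun i => (c i : E))
  obtain ⟨c, hc⟩ := Finite.exists_min fun c => Metric.infDist 0 (hull c)
  obtain ⟨q, hq, hqd⟩ : ∃ q ∈ hull c, Metric.infDist 0 (hull c) = dist 0 q :=
    ((finite_range _).isCompact_convexHull (𝕜 := ℝ)).exists_infDist_eq_dist
      (range_nonempty _).convexHull 0
  have hq_min : ∀ c', ∀ y ∈ hull c', ‖q‖ ≤ ‖y‖ := fun c' y hy =>
    calc ‖q‖ = Metric.infDist 0 (hull c) := by rw [hqd, dist_zero_left]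
      _ ≤ Metric.infDist 0 (hull c') := hc c'
      _ ≤ ‖y‖ := by simpa using Metric.infDist_le_dist_of_mem (x := 0) hy
  by_cases hq0 : q = 0
  · exact ⟨_, fun i => (c i).2, hq0 ▸ hq⟩
  exfalso
  have hsupp : ∀ i, ‖q‖ ^ 2 ≤ ⟪q, c i⟫ := fun i =>
    (convex_convexHull ℝ _).norm_sq_le_inner_of_forall_norm_le hq (hq_min c)
      (subset_convexHull ℝ _ (mem_range_self i))
  obtain ⟨i₀, hq_drop⟩ := exists_mem_convexHull_image_compl_singleton hq hq0 hsupp hcard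
  obtain ⟨s, hsS, hs⟩ := exists_mem_apply_nonpos_of_zero_mem_convexHull (hS i₀) (innerₛₗ ℝ q)
  let c' := Function.update c i₀ ⟨s, hsS⟩
  have hq' : q ∈ hull c' := by
    refine convexHull_mono ?_ hq_drop
    rintro _ ⟨i, hi, rfl⟩
    exact ⟨i, by simp [c', Function.update_of_ne (Set.mem_compl_singleton_iff.1 hi)]⟩
  have hs' : s ∈ hull c' := subset_convexHull ℝ _ ⟨i₀, by simp [c']⟩
  obtain ⟨y, hy, hyq⟩ := exists_mem_segment_norm_lt (q := q) (s := s) (by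
    rw [inner_sub_right, real_inner_self_eq_norm_sq]
    simp only [innerₛₗ_apply_apply] at hs
    nlinarith [norm_pos_iff.2 hq0])
  exact hyq.not_ge (hq_min c' y ((convex_convexHull ℝ _).segment_subset hq' hs' hy))

end Inner

theorem exists_colorful_zero_mem_convexHull {E : Type*} [AddCommGroup E] [Module ℝ E]
    [FiniteDimensional ℝ E] {ι : Type*} [Fintype ι] (S : ι → Set E)
    (hS_fin : ∀ i, (S i).Finite) (hS : ∀ i, (0 : E) ∈ convexHull ℝ (S i))
    (hcard : finrank ℝ E < Fintype.card ι) :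
    ∃ c : ι → E, (∀ i, c i ∈ S i) ∧ (0 : E) ∈ convexHull ℝ (range c) := by
  let e : E ≃ₗ[ℝ] EuclideanSpace ℝ (Fin (finrank ℝ E)) := LinearEquiv.ofFinrankEq _ _ (by simp)
  obtain ⟨c, hcS, hc0⟩ := exists_colorful_zero_mem_convexHull_of_inner (fun i => e '' S i)
    (fun i => (hS_fin i).image e)
    (fun i => (e.toLinearMap.image_convexHull (S i)).subset ⟨0, hS i, map_zero e⟩)
    (by simpa using hcard)
  refine ⟨e.symm ∘ c, fun i => ?_, ?_⟩
  · obtain ⟨y, hy, hyc⟩ := hcS i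
    simpa [← hyc] using hy
  · rw [range_comp]
    exact (e.symm.toLinearMap.image_convexHull (range c)).subset ⟨0, hc0, map_zero _⟩

section DiffLast

variable (R W : Type*) [Ring R] [AddCommGroup W] [Module R W] (κ : ℕ)

/-- In the notation of the header, `diffLast R W κ (Pi.single j u) = e_j ⊗ u`, where `e_j` is the
`j`-th standard basis vector of `R^κ` for `j < κ` and `e_κ = -(1, …, 1)`. -/
def diffLast : (Fin (κ + 1) → W) →ₗ[R] (Fin κ → W) :=
  LinearMap.pi fun k =>
    LinearMap.proj (R := R) (φ := fun _ => W) k.castSucc - LinearMap.proj (Fin.last κ)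

variable {R W κ}

@[simp]
lemma diffLast_apply (v : Fin (κ + 1) → W) (k : Fin κ) :
    diffLast R W κ v k = v k.castSucc - v (Fin.last κ) := rfl

lemma diffLast_eq_zero_iff {v : Fin (κ + 1) → W} :
    diffLast R W κ v = 0 ↔ ∀ j, v j = v (Fin.last κ) := by
  refine ⟨fun h j => ?_, fun h => funext fun k => by simp [h k.castSucc]⟩
  rcases j.eq_castSucc_or_eq_last with ⟨k, rfl⟩ | rfl
  · exact sub_eq_zero.1 (congrFun h k)
  · rfl

lemma sum_diffLast_single (u : W) : ∑ j, diffLast R W κ (Pi.single j u) = 0 := by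
  rw [← map_sum, Finset.univ_sum_single (fun _ => u), diffLast_eq_zero_iff]
  exact fun _ => rfl

lemma sum_smul_diffLast_single {ι : Type*} (s : Finset ι) (w : ι → R) (σ : ι → Fin (κ + 1))
    (u : ι → W) :
    ∑ i ∈ s, w i • diffLast R W κ (Pi.single (σ i) (u i)) =
      diffLast R W κ fun j => ∑ i ∈ s with σ i = j, w i • u i := by
  simp_rw [← map_smul, ← map_sum]
  congr 1
  ext j
  simp [Finset.sum_apply, Pi.single_apply, Finset.sum_filter, eq_comm]

end DiffLast

theorem exists_tverberg_coloring {V : Type*} [AddCommGroup V] [Module ℝ V]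
    [FiniteDimensional ℝ V] {ι : Type*} [Fintype ι] {κ : ℕ} (x : ι → V)
    (h : κ * (finrank ℝ V + 1) < Fintype.card ι) :
    ∃ σ : ι → Fin (κ + 1), (⋂ j, convexHull ℝ (x '' {i | σ i = j})).Nonempty := by
  classical
  let u : ι → ℝ × V := fun i => (1, x i)
  obtain ⟨c, hcS, hc0⟩ := exists_colorful_zero_mem_convexHull
    (fun i => range fun j => diffLast ℝ (ℝ × V) κ (Pi.single j (u i))) (fun _ => finite_range _)
    (fun _ => zero_mem_convexHull_range_of_sum_eq_zero (sum_diffLast_single _))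
    (by simpa [Module.finrank_pi_fintype, Module.finrank_prod, add_comm] using h)
  choose σ hσ using hcS
  obtain ⟨s, w, hw0, hw1, hwc⟩ := (convexHull_range_eq_exists_affineCombination c).subset hc0
  rw [s.affineCombination_eq_linear_combination c w hw1] at hwc
  let v j := ∑ i ∈ s with σ i = j, w i • u i
  have hv : ∀ j, v j = v (Fin.last κ) := by
    rw [← diffLast_eq_zero_iff (R := ℝ), ← sum_smul_diffLast_single]
    simpa [hσ] using hwc
  have hmass : ∀ j, ∑ i ∈ s with σ i = j, w i = ((κ : ℝ) + 1)⁻¹ := by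
    have hfst : ∀ j, (v j).1 = ∑ i ∈ s with σ i = j, w i := by simp [v, u, Prod.fst_sum]
    have htotal : ((κ : ℝ) + 1) * (v (Fin.last κ)).1 = 1 := by
      calc ((κ : ℝ) + 1) * (v (Fin.last κ)).1
          = ∑ j, (v j).1 := by simp [Finset.sum_congr rfl fun j _ => congrArg Prod.fst (hv j)]
        _ = 1 := by simp_rw [hfst, Finset.sum_fiberwise, hw1]
    intro j
    rw [← hfst, hv]
    exact eq_inv_of_mul_eq_one_right htotal
  refine ⟨σ, ((κ : ℝ) + 1) • (v (Fin.last κ)).2, mem_iInter.2 fun j => ?_⟩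
  have hpoint : ((κ : ℝ) + 1) • (v (Fin.last κ)).2 = {i ∈ s | σ i = j}.centerMass w x := by
    rw [← hv j, Finset.centerMass, hmass, inv_inv]
    simp [v, u, Prod.snd_sum]
  rw [hpoint]
  exact Finset.centerMass_mem_convexHull _ (fun i hi => hw0 i (Finset.mem_filter.1 hi).1)
    (by rw [hmass]; positivity) (fun i hi => mem_image_of_mem x (Finset.mem_filter.1 hi).2)

/-- Tverberg's theorem: if m ≥ κ(n+1)+1, there is a partition of
{1,...,m} into κ+1 pairwise disjoint subsets whose convex hulls have a common
point. -/
theorem stmt5 {n m κ : ℕ} (x : Fin m → EuclideanSpace ℝ (Fin n))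
    (h : κ * (n + 1) + 1 ≤ m) :
    ∃ B : Fin (κ + 1) → Finset (Fin m),
      (∀ i j, i ≠ j → Disjoint (B i) (B j)) ∧
      Finset.univ.biUnion B = Finset.univ ∧
      (⋂ i, convexHull ℝ (x '' ↑(B i))).Nonempty := by
  obtain ⟨σ, hσ⟩ := exists_tverberg_coloring x (by simpa using h)
  refine ⟨fun j => {i | σ i = j}, fun j j' hjj' => ?_, ?_, by simpa using hσ⟩
  · exact Finset.disjoint_filter.2 fun _ _ hj hj' => hjj' (hj.symm.trans hj')
  · ext i
    simp
end

section
/- Let x_1,...,x_m ∈ R^n with at most κ malicious points, and suppose either Ā ≠ ∅ (containing only normal indices) or m ≥ κ(n+1)+1. Then there exists a point u ∈ R^n that is a convex combination of m − κ points of which all are normal; moreover u can be taken in the intersection R = ⋂_j conv(x_{A_j}) over all (m−κ)-subsets A_j containing Ā. -/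
/-- main theorem: with at most κ malicious points, if either the
known-normal set Ā is nonempty or m ≥ κ(n+1)+1, then there is a point u in
R = ⋂ⱼ conv(x_{Aⱼ}) (intersection over all (m-κ)-subsets containing Ā) that is
a convex combination of m-κ points all of which are normal. -/
theorem stmt14 {n m κ : ℕ} (x : Fin m → EuclideanSpace ℝ (Fin n))
    (M Abar : Finset (Fin m)) (hM : M.card ≤ κ) (hκ : κ ≤ m)
    (hAbarM : Disjoint Abar M) (hAbarCard : Abar.card ≤ m - κ)
    (hcase : Abar.Nonempty ∨ κ * (n + 1) + 1 ≤ m) :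
    ∃ u : EuclideanSpace ℝ (Fin n),
      u ∈ (⋂ A ∈ {A : Finset (Fin m) | Abar ⊆ A ∧ A.card = m - κ},
        convexHull ℝ (x '' ↑A)) ∧
      ∃ B : Finset (Fin m), B.card = m - κ ∧ Disjoint B M ∧
        u ∈ convexHull ℝ (x '' ↑B) := by
  classical
  have hMc : m - κ ≤ Mᶜ.card := by
    rw [Finset.card_compl]
    simp only [Fintype.card_fin]
    omega
  by_cases hA : Abar.Nonempty
  · obtain ⟨a, ha⟩ := hA
    have haM : a ∉ M := fun h => (Finset.disjoint_left.mp hAbarM ha) h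
    refine ⟨x a, ?_, ?_⟩
    · refine Set.mem_iInter₂.mpr fun A hA' => ?_
      exact subset_convexHull ℝ _ (Set.mem_image_of_mem x (hA'.1 ha))
    · have h1 : ({a} : Finset (Fin m)) ⊆ Mᶜ := by
        simp [Finset.singleton_subset_iff, Finset.mem_compl, haM]
      have hcard1 : ({a} : Finset (Fin m)).card ≤ m - κ := by
        have : 1 ≤ Abar.card := Finset.card_pos.mpr ⟨a, ha⟩
        simp; omega
      obtain ⟨B, haB, hBMc, hBcard⟩ := Finset.exists_subsuperset_card_eq h1 hcard1 hMc
      refine ⟨B, hBcard, Finset.disjoint_left.mpr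
        fun i hiB hiM => Finset.mem_compl.mp (hBMc hiB) hiM, ?_⟩
      exact subset_convexHull ℝ _
        (Set.mem_image_of_mem x (haB (Finset.mem_singleton_self a)))
  · have hAe : Abar = ∅ := Finset.not_nonempty_iff_eq_empty.mp hA
    have hm : κ * (n + 1) + 1 ≤ m := hcase.resolve_left hA
    set s : Finset (Finset (Fin m)) :=
      Finset.univ.filter (fun A => Abar ⊆ A ∧ A.card = m - κ) with hs
    have hhelly : (⋂ A ∈ s, convexHull ℝ (x '' ↑A)).Nonempty := by
      apply Convex.helly_theorem' (𝕜 := ℝ)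
      · exact fun A _ => convex_convexHull ℝ _
      · intro I hI hIcard
        rw [finrank_euclideanSpace_fin] at hIcard
        have hTcard : (I.biUnion fun A => Aᶜ).card ≤ κ * (n + 1) := by
          refine le_trans (Finset.card_biUnion_le) ?_
          have hone : ∀ A ∈ I, (Aᶜ : Finset (Fin m)).card = κ := by
            intro A hAI
            have := (Finset.mem_filter.mp (hI hAI)).2.2
            rw [Finset.card_compl]
            simp only [Fintype.card_fin]
            omega
          rw [Finset.sum_congr rfl hone]
          simp only [Finset.sum_const, smul_eq_mul]
          calc I.card * κ ≤ (n + 1) * κ := Nat.mul_le_mul_right κ hIcard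
            _ = κ * (n + 1) := Nat.mul_comm _ _
        have : ((I.biUnion fun A => Aᶜ)ᶜ : Finset (Fin m)).Nonempty := by
          rw [← Finset.card_pos, Finset.card_compl]
          simp only [Fintype.card_fin]
          omega
        obtain ⟨i, hi⟩ := this
        rw [Finset.mem_compl, Finset.mem_biUnion] at hi
        push_neg at hi
        refine ⟨x i, Set.mem_iInter₂.mpr fun A hAI => ?_⟩
        have : i ∈ A := by
          have := hi A hAI
          simpa [Finset.mem_compl] using this
        exact subset_convexHull ℝ _ (Set.mem_image_of_mem x this)
    obtain ⟨u, hu⟩ := hhelly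
    have humem : ∀ A : Finset (Fin m), Abar ⊆ A → A.card = m - κ →
        u ∈ convexHull ℝ (x '' ↑A) := by
      intro A h1 h2
      exact Set.mem_iInter₂.mp hu A (by simp [hs, h1, h2])
    obtain ⟨B, hBMc, hBcard⟩ := Finset.exists_subset_card_eq hMc
    refine ⟨u, Set.mem_iInter₂.mpr fun A hA' => humem A hA'.1 hA'.2,
      B, hBcard, Finset.disjoint_left.mpr
        fun i hiB hiM => Finset.mem_compl.mp (hBMc hiB) hiM,
      humem B (by simp [hAe]) hBcard⟩
end
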